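/- Let η : K → End_F(V) be the F-algebra embedding determined by W, i.e. η_t acts as multiplication by t on W and as multiplication by ι(t) on σ(W), and preserves V = 1 ⊗ V ⊆ V_K. Then for every θ ∈ U* one has η_{√−q}(0, θ) = (q·(θ⌟Θ), 0) in V = U ⊕ U*. -/

import Mathlib

/-!
Since `ι ≠ id` and `s` generates `K`, the conjugation sends `s` to `-s`, so `σ` maps the generator
`w = (-s)·(c θ, 0) + (0, θ)` of `W` to `s·(c θ, 0) + (0, θ)`. The two vectors add up to `2·(0, θ)`,
and `η_s` scales them by `s` and `-s` respectively; hence `2·η_s(0, θ) = -2s²·(c θ, 0) = 2q·(c θ, 0)`.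
-/

/-!
Setup: `F` a field of characteristic zero, `q ∈ F` with `−q` not a square in `F`,
`K = F(√−q)` (generated over `F` by `s` with `s² = −q`) with nontrivial `F`-automorphism
`ι`; `U` a finite-dimensional `F`-vector space, `V := U × U*`, `V_K := K ⊗[F] V`,
`σ := ι ⊗ id`.  `Θ ∈ ∧²U` is nondegenerate with contraction `c : U* → U` (`ι(c θ) = θ⌟Θ`).
`W ⊆ V_K` is the graph of the `K`-linear extension of `θ ↦ −s·(c θ)` (the `K`-span of the
vectors `(−s)·(1 ⊗ (c θ, 0)) + 1 ⊗ (0, θ)`), so that `V_K = W ⊕ σ(W)`, and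
`η_t ∈ End_F(V_K)` acts as multiplication by `t` on `W` and by `ι(t)` on `σ(W)`
(quantified here by these defining properties).
-/

open scoped TensorProduct

/-- The `ι`-semilinear automorphism `σ := ι ⊗ id_V` of `V_K = K ⊗[F] V`. -/
noncomputable def sigmaMap (F : Type*) [Field F] (K : Type*) [Field K] [Algebra F K]
    (V : Type*) [AddCommGroup V] [Module F V] (ι : K ≃ₐ[F] K) :
    K ⊗[F] V →ₗ[F] K ⊗[F] V :=
  TensorProduct.map ι.toLinearMap LinearMap.id

/-- The graph `W = {(−s·(θ⌟Θ)_K, θ) : θ ∈ K ⊗ U*} ⊆ V_K` of the `K`-linear extension of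
`θ ↦ −s·(c θ)`, realized as the `K`-span of its values on `1 ⊗ U*`. -/
noncomputable def Wgraph (F : Type*) [Field F] (K : Type*) [Field K] [Algebra F K] (s : K)
    (U : Type*) [AddCommGroup U] [Module F U] (c : Module.Dual F U →ₗ[F] U) :
    Submodule K (K ⊗[F] (U × Module.Dual F U)) :=
  Submodule.span K (Set.range fun θ : Module.Dual F U =>
    (-s) • ((1 : K) ⊗ₜ[F] ((c θ, 0) : U × Module.Dual F U))
      + (1 : K) ⊗ₜ[F] (((0 : U), θ) : U × Module.Dual F U))

theorem AlgEquiv.apply_eq_neg_of_sq_eq_algebraMap {F K : Type*} [CommSemiring F] [CommRing K]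
    [IsDomain K] [Algebra F K] {s : K} {a : F} (hs : s ^ 2 = algebraMap F K a)
    (hgen : Algebra.adjoin F ({s} : Set K) = ⊤) {ι : K ≃ₐ[F] K} (hι : ι ≠ AlgEquiv.refl) :
    ι s = -s := by
  have hsq : (ι s - s) * (ι s + s) = 0 := by
    linear_combination (by rw [← map_pow, hs, AlgEquiv.commutes] : ι s ^ 2 = s ^ 2)
  refine eq_neg_of_add_eq_zero_left ((mul_eq_zero.mp hsq).resolve_left fun h ↦ hι ?_)
  refine AlgEquiv.coe_toAlgHom_injective (AlgHom.ext_of_adjoin_eq_top hgen ?_)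
  rintro _ rfl
  exact sub_eq_zero.mp h

theorem sigmaMap_smul {F K V : Type*} [Field F] [Field K] [Algebra F K] [AddCommGroup V]
    [Module F V] (ι : K ≃ₐ[F] K) (t : K) (z : K ⊗[F] V) :
    sigmaMap F K V ι (t • z) = ι t • sigmaMap F K V ι z := by
  induction z using TensorProduct.induction_on with
  | zero => simp
  | tmul a v => simp [sigmaMap, TensorProduct.smul_tmul']
  | add z z' hz hz' => simp only [smul_add, map_add, hz, hz']

theorem sigmaMap_one_tmul {F K V : Type*} [Field F] [Field K] [Algebra F K] [AddCommGroup V]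
    [Module F V] (ι : K ≃ₐ[F] K) (v : V) :
    sigmaMap F K V ι ((1 : K) ⊗ₜ[F] v) = (1 : K) ⊗ₜ[F] v := by
  simp [sigmaMap]

theorem AddMonoidHom.map_eq_neg_sq_smul_of_eigen {K M : Type*} [Field K] [AddCommGroup M]
    [Module K M] (h2 : (2 : K) ≠ 0) (f : M →+ M) {s : K} {x y : M}
    (h₁ : f ((-s) • x + y) = s • ((-s) • x + y)) (h₂ : f (s • x + y) = (-s) • (s • x + y)) :
    f y = -s ^ 2 • x := by
  have hsum : (2 : K) • f y = (2 : K) • (-s ^ 2 • x) := calc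
    (2 : K) • f y = f ((-s) • x + y) + f (s • x + y) := by
      rw [← map_add, two_smul, ← map_add]; congr 1; module
    _ = (2 : K) • (-s ^ 2 • x) := by rw [h₁, h₂]; module
  exact smul_right_injective M h2 hsum

theorem stmt17_general (F : Type*) [Field F] [CharZero F] (q : F)
    (K : Type*) [Field K] [Algebra F K] (s : K) (hs : s ^ 2 = algebraMap F K (-q))
    (hgen : Algebra.adjoin F ({s} : Set K) = ⊤)
    (ι : K ≃ₐ[F] K) (hι : ι ≠ AlgEquiv.refl)
    (U : Type*) [AddCommGroup U] [Module F U]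
    (c : Module.Dual F U →ₗ[F] U)
    (η : K → Module.End F (K ⊗[F] (U × Module.Dual F U)))
    (hη1 : ∀ t : K, ∀ x ∈ Wgraph F K s U c, η t x = t • x)
    (hη2 : ∀ t : K, ∀ x ∈ Wgraph F K s U c,
      η t (sigmaMap F K (U × Module.Dual F U) ι x)
        = ι t • sigmaMap F K (U × Module.Dual F U) ι x) :
    ∀ θ : Module.Dual F U,
      η s ((1 : K) ⊗ₜ[F] (((0 : U), θ) : U × Module.Dual F U))
        = (1 : K) ⊗ₜ[F] ((q • c θ, 0) : U × Module.Dual F U) := by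
  intro θ
  have hιs : ι s = -s := AlgEquiv.apply_eq_neg_of_sq_eq_algebraMap hs hgen hι
  have h2 : (2 : K) ≠ 0 := by
    simpa only [map_ofNat] using (map_ne_zero (algebraMap F K)).mpr (two_ne_zero : (2 : F) ≠ 0)
  set x := (1 : K) ⊗ₜ[F] ((c θ, 0) : U × Module.Dual F U)
  set y := (1 : K) ⊗ₜ[F] (((0 : U), θ) : U × Module.Dual F U)
  have hw : (-s) • x + y ∈ Wgraph F K s U c := Submodule.subset_span ⟨θ, rfl⟩
  have hσw : sigmaMap F K _ ι ((-s) • x + y) = s • x + y := by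
    rw [map_add, sigmaMap_smul, sigmaMap_one_tmul, sigmaMap_one_tmul, map_neg, hιs, neg_neg]
  have hησw : η s (s • x + y) = (-s) • (s • x + y) := by simpa only [hσw, hιs] using hη2 s _ hw
  have hηy : η s y = -s ^ 2 • x :=
    (η s).toAddMonoidHom.map_eq_neg_sq_smul_of_eigen h2 (hη1 s _ hw) hησw
  rw [hηy, hs, map_neg, neg_neg, algebraMap_smul, ← TensorProduct.tmul_smul, Prod.smul_mk,
    smul_zero]

/-- for the `F`-algebra embedding `η` determined by `W` (acting as `t` on `W`
and `ι(t)` on `σ(W)`, and preserving `V = 1 ⊗ V`), one has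
`η_{√−q}(0, θ) = (q·(θ⌟Θ), 0)` for every `θ ∈ U*`. -/
theorem stmt17 (F : Type*) [Field F] [CharZero F] (q : F) (hq : ∀ x : F, x ^ 2 ≠ -q)
    (K : Type*) [Field K] [Algebra F K] (s : K) (hs : s ^ 2 = algebraMap F K (-q))
    (hgen : Algebra.adjoin F ({s} : Set K) = ⊤)
    (ι : K ≃ₐ[F] K) (hι : ι ≠ AlgEquiv.refl)
    (U : Type*) [AddCommGroup U] [Module F U] [FiniteDimensional F U]
    (Θ : ExteriorAlgebra F U)
    (hΘ : Θ ∈ (LinearMap.range (ExteriorAlgebra.ι F : U →ₗ[F] ExteriorAlgebra F U)) ^ 2)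
    (c : Module.Dual F U →ₗ[F] U)
    (hc : ∀ θ : Module.Dual F U,
      ExteriorAlgebra.ι F (c θ) =
        CliffordAlgebra.contractLeft (Q := (0 : QuadraticForm F U)) θ Θ)
    (hcnd : Function.Bijective c)
    (η : K → Module.End F (K ⊗[F] (U × Module.Dual F U)))
    (hη1 : ∀ t : K, ∀ x ∈ Wgraph F K s U c, η t x = t • x)
    (hη2 : ∀ t : K, ∀ x ∈ Wgraph F K s U c,
      η t (sigmaMap F K (U × Module.Dual F U) ι x)
        = ι t • sigmaMap F K (U × Module.Dual F U) ι x) :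
    ∀ θ : Module.Dual F U,
      η s ((1 : K) ⊗ₜ[F] (((0 : U), θ) : U × Module.Dual F U))
        = (1 : K) ⊗ₜ[F] ((q • c θ, 0) : U × Module.Dual F U) :=
  stmt17_general F q K s hs hgen ι hι U c η hη1 hη2
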